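/- Let n ≥ 4 be an even integer, q a nonzero complex number, and let i denote a fixed square root of −1 in ℂ. For every critical point p of W_0, set f_1 = z_2(p) and f_2 = i^{n/2}·(2q·z_1(p) − z_2(p)^{n/2}). Then f_1^{n+1} = 4q·f_1, f_1·f_2 = 0, and f_2^2 = −4q + f_1^n. -/

import Mathlib

open Finset

/-- One-based access to the coordinates of a point `z ∈ ℂⁿ`: `zc n z j = z_j` for
`1 ≤ j ≤ n` (and `0` for out-of-range indices, which are never used). -/
noncomputable def zc (n : ℕ) (z : Fin n → ℂ) (j : ℕ) : ℂ :=
  if h : 1 ≤ j ∧ j ≤ n then z ⟨j - 1, by omega⟩ else 0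

/-- The mirror Landau–Ginzburg potential of the quadric `Qⁿ`:
`W₀(z) = q z₁² z_n/(z₁⋯z_n − 1) + z₂ + ∑_{i=2}^{n−1} z_i z_{i+1}`,
defined on `Zⁿ = {z ∈ ℂⁿ : z₁⋯z_n ≠ 1}`. -/
noncomputable def W0 (n : ℕ) (q : ℂ) (z : Fin n → ℂ) : ℂ :=
  q * (zc n z 1) ^ 2 * zc n z n / ((∏ j, z j) - 1)
    + zc n z 2 + ∑ i ∈ Finset.Icc 2 (n - 1), zc n z i * zc n z (i + 1)

/-- `z` is a critical point of `W₀` in `Zⁿ`: `z₁⋯z_n ≠ 1` and all `n` partial derivatives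
`∂W₀/∂z_j` vanish at `z`. -/
def IsCritPt (n : ℕ) (q : ℂ) (z : Fin n → ℂ) : Prop :=
  (∏ j, z j) ≠ 1 ∧
    ∀ j : Fin n, deriv (fun t => W0 n q (Function.update z j t)) (z j) = 0

/-- Membership in `V(I₁)`: `z_{2i+1} = 1` for `1 ≤ i ≤ n/2−1`, `z_{2i} = z_n` for
`1 ≤ i ≤ n/2`, `q z₁² = 1`, and `z₁ z_n^{n/2} = 2`. -/
def MemV1 (n : ℕ) (q : ℂ) (z : Fin n → ℂ) : Prop :=
  (∀ i : ℕ, 1 ≤ i → i ≤ n / 2 - 1 → zc n z (2 * i + 1) = 1) ∧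
    (∀ i : ℕ, 1 ≤ i → i ≤ n / 2 → zc n z (2 * i) = zc n z n) ∧
    q * (zc n z 1) ^ 2 = 1 ∧ zc n z 1 * (zc n z n) ^ (n / 2) = 2

/-- Membership in `V(I₂)`: `z_{2i+1} = (−1)^i` for `1 ≤ i ≤ n/2−1`, `z_{2i} = 0` for
`1 ≤ i ≤ n/2`, and `q z₁² = (−1)^{(n−2)/2}`. -/
def MemV2 (n : ℕ) (q : ℂ) (z : Fin n → ℂ) : Prop :=
  (∀ i : ℕ, 1 ≤ i → i ≤ n / 2 - 1 → zc n z (2 * i + 1) = (-1 : ℂ) ^ i) ∧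
    (∀ i : ℕ, 1 ≤ i → i ≤ n / 2 → zc n z (2 * i) = 0) ∧
    q * (zc n z 1) ^ 2 = (-1 : ℂ) ^ ((n - 2) / 2)

/-!
Clearing the denominator `(z₁⋯zₙ - 1)²`, the equation `∂W₀/∂z_j = 0` says that
`A ∏_{k ≠ j} z_k`, with `A = q z₁² zₙ`, equals an explicit polynomial in the `z_k`.

If `A = 0`, the equations for `2 ≤ j < n` read `1 + z₃ = 0` and `z_{j-1} + z_{j+1} = 0`, so the
odd coordinates alternate in sign and the even ones are `±z₂`; the last equation then forces
`z₁ ≠ 0`, hence `zₙ = z₂ = 0` and `q z₁² = (-1)^{n/2-1}`: the point lies on `V(I₂)`.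
If `A ≠ 0`, multiplying the `j`-th equation by `z_j` turns its left side into `A z₁⋯zₙ`; the
first equation then gives `z₁⋯zₙ = 2`, and the others say that `z₂` and the consecutive products
`z₂z₃, …, z_{n-1}zₙ` all equal `A`, so that the even coordinates agree, the odd ones from `z₃` on
are `1`, and `q z₁² = 1`: the point lies on `V(I₁)`.
On either locus the three relations are a direct computation.
-/

theorem eq_pow_mul_of_step_two {M : Type*} [Monoid M] {x : ℕ → M} {s : M} {a b : ℕ}
    (h : ∀ k, a ≤ k → k + 2 ≤ b → x (k + 2) = s * x k) :
    ∀ i, a + 2 * i ≤ b → x (a + 2 * i) = s ^ i * x a := by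
  intro i
  induction i with
  | zero => simp
  | succ i ih =>
    intro hi
    rw [show a + 2 * (i + 1) = a + 2 * i + 2 by ring, h _ (by omega) (by omega), ih (by omega),
      pow_succ', mul_assoc]

theorem eq_of_add_succ_eq_add_self {M : Type*} [AddRightCancelSemigroup M] {x : ℕ → M} {c : M}
    {a b : ℕ} (h : ∀ k, a ≤ k → k < b → x k + x (k + 1) = c + c) (hb : x b = c) :
    ∀ k, a ≤ k → k ≤ b → x k = c := by
  intro k hak hkb
  induction hkb using Nat.decreasingInduction with
  | self => exact hb
  | of_succ k hk ih => exact add_right_cancel (ih (by omega) ▸ h k hak hk)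

theorem Even.pow_div_two_sq {M : Type*} [Monoid M] {n : ℕ} (hev : Even n) (x : M) :
    (x ^ (n / 2)) ^ 2 = x ^ n := by
  rw [← pow_mul, Nat.div_two_mul_two_of_even hev]

theorem zc_succ {n : ℕ} (z : Fin n → ℂ) (j : Fin n) : zc n z (j + 1) = z j := by
  simp [zc, j.isLt]

theorem zc_update {n : ℕ} (z : Fin n → ℂ) (j : Fin n) (t : ℂ) (k : ℕ) :
    zc n (Function.update z j t) k = if k = j + 1 then t else zc n z k := by
  have := j.isLt
  unfold zc
  split_ifs <;> first | omega | simp [Function.update_apply, Fin.ext_iff] <;> omega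

theorem hasDerivAt_zc_update {n : ℕ} (z : Fin n → ℂ) (j : Fin n) (k : ℕ) :
    HasDerivAt (fun t => zc n (Function.update z j t) k) (if k = j + 1 then 1 else 0) (z j) := by
  simp_rw [zc_update]
  split_ifs
  exacts [hasDerivAt_id _, hasDerivAt_const _ _]

theorem mul_prod_eq_of_mul_prod_erase_eq {n : ℕ} {z : Fin n → ℂ} {j : Fin n} {m : ℕ}
    (hm : (j : ℕ) + 1 = m) {A B : ℂ} (h : A * ∏ k ∈ univ.erase j, z k = B) :
    A * ∏ k, z k = zc n z m * B := by
  rw [← hm, zc_succ, ← mul_prod_erase _ _ (mem_univ j), ← h]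
  ring

theorem zc_ne_zero_of_prod_ne_zero {n : ℕ} {z : Fin n → ℂ} (hP : ∏ k, z k ≠ 0) {k : ℕ}
    (hk : 1 ≤ k) (hkn : k ≤ n) : zc n z k ≠ 0 := by
  obtain ⟨j, rfl⟩ : ∃ j : Fin n, (j : ℕ) + 1 = k := ⟨⟨k - 1, by omega⟩, by simp; omega⟩
  rw [zc_succ]
  exact fun h => hP (prod_eq_zero (mem_univ j) h)

theorem prod_eq_zc_one_mul_pow {n : ℕ} {z : Fin n → ℂ} {y : ℂ} (hn : 2 ≤ n) (hev : Even n)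
    (hodd : ∀ i : ℕ, 1 ≤ i → i ≤ n / 2 - 1 → zc n z (2 * i + 1) = 1)
    (heven : ∀ i : ℕ, 1 ≤ i → i ≤ n / 2 → zc n z (2 * i) = y) :
    ∏ k, z k = zc n z 1 * y ^ (n / 2) := by
  have hpairs : ∀ i, 1 ≤ i → i ≤ n / 2 →
      ∏ k ∈ range (2 * i), zc n z (k + 1) = zc n z 1 * y ^ i := by
    intro i hi
    induction i, hi using Nat.le_induction with
    | base => simp [prod_range_succ, heven 1 le_rfl (by omega)]
    | succ i hi ih =>
      intro hin
      rw [show 2 * (i + 1) = 2 * i + 1 + 1 by ring, prod_range_succ, prod_range_succ, ih (by omega),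
        hodd i hi (by omega), show 2 * i + 1 + 1 = 2 * (i + 1) by ring, heven _ (by omega) hin]
      ring
  have h := hpairs (n / 2) (by omega) le_rfl
  rw [Nat.two_mul_div_two_of_even hev, ← Fin.prod_univ_eq_prod_range] at h
  simpa [zc_succ] using h

/-- `j : Fin n` is the coordinate `z_{j+1}`, whose neighbours in the path `z₂z₃ + ⋯ + z_{n-1}zₙ`
are `zc n z j` and `zc n z (j + 2)`. -/
theorem hasDerivAt_W0_update {n : ℕ} (q : ℂ) (z : Fin n → ℂ) (hz : ∏ k, z k ≠ 1) (j : Fin n) :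
    HasDerivAt (fun t => W0 n q (Function.update z j t))
      ((((if (j : ℕ) = 0 then 2 * q * zc n z 1 * zc n z n else 0)
            + (if (j : ℕ) + 1 = n then q * zc n z 1 ^ 2 else 0)) * (∏ k, z k - 1)
          - q * zc n z 1 ^ 2 * zc n z n * ∏ k ∈ univ.erase j, z k) / (∏ k, z k - 1) ^ 2
        + ((if (j : ℕ) = 1 then 1 else 0)
          + (if 1 ≤ (j : ℕ) ∧ (j : ℕ) + 2 ≤ n then zc n z (j + 2) else 0)
          + (if 2 ≤ (j : ℕ) then zc n z j else 0))) (z j) := by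
  have := j.isLt
  have hx (k : ℕ) := hasDerivAt_zc_update z j k
  have hP : HasDerivAt (fun t => ∏ k, Function.update z j t k - 1)
      (∏ k ∈ univ.erase j, z k) (z j) := by
    simp_rw [prod_update_of_mem (mem_univ j), ← erase_eq]
    simpa using ((hasDerivAt_id (z j)).mul_const _).sub_const 1
  have hD : ∏ k, Function.update z j (z j) k - 1 ≠ 0 := by
    simpa [sub_eq_zero] using hz
  have H := (((((hx 1).fun_pow 2).const_mul q).fun_mul (hx n)).fun_div hP hD).fun_add (hx 2)
    |>.fun_add (HasDerivAt.fun_sum (u := Icc 2 (n - 1)) fun i _ => (hx i).fun_mul (hx (i + 1)))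
  simp only [Function.update_eq_self] at H
  refine H.congr_deriv ?_
  have hsum : ∑ i ∈ Icc 2 (n - 1), ((if i = (j : ℕ) + 1 then (1 : ℂ) else 0) * zc n z (i + 1)
        + zc n z i * (if i + 1 = (j : ℕ) + 1 then 1 else 0))
      = (if 1 ≤ (j : ℕ) ∧ (j : ℕ) + 2 ≤ n then zc n z (j + 2) else 0)
        + (if 2 ≤ (j : ℕ) then zc n z j else 0) := by
    simp only [ite_mul, mul_ite, one_mul, mul_one, zero_mul, mul_zero, add_left_inj,
      sum_add_distrib, sum_ite_eq', mem_Icc]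
    congr 1 <;> split_ifs <;> first | rfl | omega
  rw [hsum]
  simp only [show 1 = (j : ℕ) + 1 ↔ (j : ℕ) = 0 by omega,
    show 2 = (j : ℕ) + 1 ↔ (j : ℕ) = 1 by omega, eq_comm (a := n)]
  push_cast
  split_ifs <;> ring

section CriticalPoints

variable {n : ℕ} {q : ℂ} {z : Fin n → ℂ}

theorem IsCritPt.partial_eq (hz : IsCritPt n q z) (j : Fin n) :
    q * zc n z 1 ^ 2 * zc n z n * ∏ k ∈ univ.erase j, z k
      = ((if (j : ℕ) = 0 then 2 * q * zc n z 1 * zc n z n else 0)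
            + (if (j : ℕ) + 1 = n then q * zc n z 1 ^ 2 else 0)) * (∏ k, z k - 1)
        + ((if (j : ℕ) = 1 then 1 else 0)
          + (if 1 ≤ (j : ℕ) ∧ (j : ℕ) + 2 ≤ n then zc n z (j + 2) else 0)
          + (if 2 ≤ (j : ℕ) then zc n z j else 0)) * (∏ k, z k - 1) ^ 2 := by
  have hD : ∏ k, z k - 1 ≠ 0 := sub_ne_zero.mpr hz.1
  have h := (hasDerivAt_W0_update q z hz.1 j).deriv.symm.trans (hz.2 j)
  field_simp at h
  linear_combination -h

theorem IsCritPt.eq_first (hz : IsCritPt n q z) (hn : 2 ≤ n) :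
    q * zc n z 1 ^ 2 * zc n z n * ∏ k ∈ univ.erase ⟨0, by omega⟩, z k
      = 2 * q * zc n z 1 * zc n z n * (∏ k, z k - 1) := by
  have h := hz.partial_eq ⟨0, by omega⟩
  split_ifs at h <;> first | linear_combination h | contradiction | omega

theorem IsCritPt.eq_second (hz : IsCritPt n q z) (hn : 3 ≤ n) :
    q * zc n z 1 ^ 2 * zc n z n * ∏ k ∈ univ.erase ⟨1, by omega⟩, z k
      = (1 + zc n z 3) * (∏ k, z k - 1) ^ 2 := by
  have h := hz.partial_eq ⟨1, by omega⟩
  split_ifs at h <;> first | linear_combination h | contradiction | omega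

theorem IsCritPt.eq_mid (hz : IsCritPt n q z) (k : ℕ) (hk : 2 ≤ k) (hkn : k + 2 ≤ n) :
    q * zc n z 1 ^ 2 * zc n z n * ∏ i ∈ univ.erase ⟨k, by omega⟩, z i
      = (zc n z k + zc n z (k + 2)) * (∏ i, z i - 1) ^ 2 := by
  have h := hz.partial_eq ⟨k, by omega⟩
  simp only at h
  split_ifs at h <;> first | linear_combination h | contradiction | omega

theorem IsCritPt.eq_last (hz : IsCritPt n q z) (hn : 3 ≤ n) :
    q * zc n z 1 ^ 2 * zc n z n * ∏ k ∈ univ.erase ⟨n - 1, by omega⟩, z k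
      = q * zc n z 1 ^ 2 * (∏ k, z k - 1) + zc n z (n - 1) * (∏ k, z k - 1) ^ 2 := by
  have h := hz.partial_eq ⟨n - 1, by omega⟩
  simp only at h
  split_ifs at h <;> first | linear_combination h | contradiction | omega

theorem IsCritPt.zc_three_eq_neg_one (hz : IsCritPt n q z) (hn : 3 ≤ n)
    (hA : q * zc n z 1 ^ 2 * zc n z n = 0) : zc n z 3 = -1 := by
  have h := hz.eq_second hn
  rw [hA, zero_mul, eq_comm, mul_eq_zero_iff_right (pow_ne_zero 2 (sub_ne_zero.mpr hz.1))] at h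
  linear_combination h

theorem IsCritPt.zc_add_two_eq_neg (hz : IsCritPt n q z) (hA : q * zc n z 1 ^ 2 * zc n z n = 0)
    (k : ℕ) (hk : 2 ≤ k) (hkn : k + 2 ≤ n) : zc n z (k + 2) = -1 * zc n z k := by
  have h := hz.eq_mid k hk hkn
  rw [hA, zero_mul, eq_comm, mul_eq_zero_iff_right (pow_ne_zero 2 (sub_ne_zero.mpr hz.1))] at h
  linear_combination h

theorem IsCritPt.memV2 (hz : IsCritPt n q z) (hn : 4 ≤ n) (hev : Even n) (hq : q ≠ 0)
    (hA : q * zc n z 1 ^ 2 * zc n z n = 0) : MemV2 n q z := by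
  have hhalf := Nat.two_mul_div_two_of_even hev
  have hstep := hz.zc_add_two_eq_neg hA
  have hodd (i : ℕ) (hi : 1 ≤ i) (hin : i ≤ n / 2 - 1) : zc n z (2 * i + 1) = (-1 : ℂ) ^ i := by
    rw [show 2 * i + 1 = 3 + 2 * (i - 1) by omega,
      eq_pow_mul_of_step_two (a := 3) (fun k hk => hstep k (by omega)) _ (by omega),
      hz.zc_three_eq_neg_one (by omega) hA, ← pow_succ, Nat.sub_add_cancel hi]
  have heven (i : ℕ) (hi : 1 ≤ i) (hin : i ≤ n / 2) :
      zc n z (2 * i) = (-1 : ℂ) ^ (i - 1) * zc n z 2 := by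
    rw [show 2 * i = 2 + 2 * (i - 1) by omega, eq_pow_mul_of_step_two hstep _ (by omega)]
  have hn1 : zc n z (n - 1) = (-1 : ℂ) ^ ((n - 2) / 2) := by
    rw [← hodd ((n - 2) / 2) (by omega) (by omega), show 2 * ((n - 2) / 2) + 1 = n - 1 by omega]
  have hlast := hz.eq_last (by omega)
  rw [hA, zero_mul] at hlast
  have hz1 : zc n z 1 ≠ 0 := by
    intro h0
    have h : zc n z (n - 1) * (∏ k, z k - 1) ^ 2 = 0 := by
      rw [h0] at hlast
      linear_combination -hlast
    rw [mul_eq_zero_iff_right (pow_ne_zero 2 (sub_ne_zero.mpr hz.1)), hn1] at h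
    exact pow_ne_zero _ (neg_ne_zero.mpr one_ne_zero) h
  have hzn : zc n z n = 0 := by simpa [hq, hz1] using hA
  have hz2 : zc n z 2 = 0 := by
    have h := heven (n / 2) (by omega) le_rfl
    rwa [hhalf, hzn, eq_comm, mul_eq_zero_iff_left (by simp)] at h
  have hP : ∏ k, z k = 0 := by
    by_contra hP
    exact zc_ne_zero_of_prod_ne_zero hP (by omega) le_rfl hzn
  refine ⟨hodd, fun i hi hin => by rw [heven i hi hin, hz2, mul_zero], ?_⟩
  rw [hP] at hlast
  rw [← hn1]
  linear_combination hlast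

theorem IsCritPt.prod_eq_two (hz : IsCritPt n q z) (hn : 2 ≤ n)
    (hA : q * zc n z 1 ^ 2 * zc n z n ≠ 0) : ∏ k, z k = 2 := by
  have h := mul_prod_eq_of_mul_prod_erase_eq (m := 1) rfl (hz.eq_first hn)
  have h' : q * zc n z 1 ^ 2 * zc n z n * (2 - ∏ k, z k) = 0 := by linear_combination h
  rw [mul_eq_zero_iff_left hA, sub_eq_zero] at h'
  exact h'.symm

theorem IsCritPt.zc_mul_zc_succ_eq (hz : IsCritPt n q z) (hn : 3 ≤ n)
    (hA : q * zc n z 1 ^ 2 * zc n z n ≠ 0) (k : ℕ) (hk : 2 ≤ k) (hkn : k ≤ n - 1) :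
    zc n z k * zc n z (k + 1) = q * zc n z 1 ^ 2 * zc n z n := by
  have hP := hz.prod_eq_two (by omega) hA
  refine eq_of_add_succ_eq_add_self (x := fun k => zc n z k * zc n z (k + 1)) (a := 2) (b := n - 1)
    (fun k hk hkn => ?_) ?_ k hk hkn
  · have h := mul_prod_eq_of_mul_prod_erase_eq rfl (hz.eq_mid k hk (by omega))
    rw [hP] at h
    linear_combination -h
  · have h := mul_prod_eq_of_mul_prod_erase_eq (m := n) (by simp; omega) (hz.eq_last hn)
    rw [hP] at h
    rw [show n - 1 + 1 = n by omega]
    linear_combination -h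

theorem IsCritPt.zc_two_eq (hz : IsCritPt n q z) (hn : 3 ≤ n)
    (hA : q * zc n z 1 ^ 2 * zc n z n ≠ 0) : zc n z 2 = q * zc n z 1 ^ 2 * zc n z n := by
  have h := mul_prod_eq_of_mul_prod_erase_eq (m := 2) rfl (hz.eq_second hn)
  rw [hz.prod_eq_two (by omega) hA] at h
  linear_combination -h - hz.zc_mul_zc_succ_eq hn hA 2 le_rfl (by omega)

theorem IsCritPt.memV1 (hz : IsCritPt n q z) (hn : 4 ≤ n) (hev : Even n)
    (hA : q * zc n z 1 ^ 2 * zc n z n ≠ 0) : MemV1 n q z := by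
  have hhalf := Nat.two_mul_div_two_of_even hev
  have hpair := hz.zc_mul_zc_succ_eq (by omega) hA
  have hz2 := hz.zc_two_eq (by omega) hA
  have hne (k : ℕ) (hk : 1 ≤ k) (hkn : k ≤ n) : zc n z k ≠ 0 :=
    zc_ne_zero_of_prod_ne_zero (by rw [hz.prod_eq_two (by omega) hA]; norm_num) hk hkn
  have hstep (k : ℕ) (hk : 2 ≤ k) (hkn : k + 2 ≤ n) : zc n z (k + 2) = 1 * zc n z k := by
    refine mul_left_cancel₀ (hne (k + 1) (by omega) (by omega)) ?_
    linear_combination hpair (k + 1) (by omega) (by omega) - hpair k hk (by omega)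
  have hz3 : zc n z 3 = 1 := by
    have h := hpair 2 le_rfl (by omega)
    rw [← hz2] at h
    exact (mul_eq_left₀ (hz2 ▸ hA)).mp h
  have hodd (i : ℕ) (hi : 1 ≤ i) (hin : i ≤ n / 2 - 1) : zc n z (2 * i + 1) = 1 := by
    rw [show 2 * i + 1 = 3 + 2 * (i - 1) by omega,
      eq_pow_mul_of_step_two (a := 3) (fun k hk => hstep k (by omega)) _ (by omega), hz3,
      one_pow, one_mul]
  have heven₂ (i : ℕ) (hi : 1 ≤ i) (hin : i ≤ n / 2) : zc n z (2 * i) = zc n z 2 := by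
    rw [show 2 * i = 2 + 2 * (i - 1) by omega, eq_pow_mul_of_step_two hstep _ (by omega), one_pow,
      one_mul]
  have heven (i : ℕ) (hi : 1 ≤ i) (hin : i ≤ n / 2) : zc n z (2 * i) = zc n z n := by
    rw [heven₂ i hi hin, ← heven₂ (n / 2) (by omega) le_rfl, hhalf]
  refine ⟨hodd, heven, ?_, ?_⟩
  · have h : q * zc n z 1 ^ 2 * zc n z n = zc n z n := by rw [← hz2, ← heven 1 le_rfl (by omega)]
    exact (mul_eq_right₀ (hne n (by omega) le_rfl)).mp h
  · rw [← prod_eq_zc_one_mul_pow (by omega) hev hodd heven, hz.prod_eq_two (by omega) hA]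

theorem IsCritPt.memV1_or_memV2 (hz : IsCritPt n q z) (hn : 4 ≤ n) (hev : Even n) (hq : q ≠ 0) :
    MemV1 n q z ∨ MemV2 n q z := by
  rcases eq_or_ne (q * zc n z 1 ^ 2 * zc n z n) 0 with hA | hA
  exacts [Or.inr (hz.memV2 hn hev hq hA), Or.inl (hz.memV1 hn hev hA)]

def QuadricQHRelations (n : ℕ) (q h p : ℂ) : Prop :=
  h ^ (n + 1) = 4 * q * h ∧ h * p = 0 ∧ p ^ 2 = -4 * q + h ^ n

theorem MemV1.quadricQHRelations (hV : MemV1 n q z) (hn : 2 ≤ n) (hev : Even n) :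
    QuadricQHRelations n q (zc n z 2)
      (Complex.I ^ (n / 2) * (2 * q * zc n z 1 - zc n z 2 ^ (n / 2))) := by
  obtain ⟨-, heven, hq1, hprod⟩ := hV
  have hzn : zc n z 2 = zc n z n := heven 1 le_rfl (by omega)
  rw [← hzn] at hprod
  have hhalf : zc n z 2 ^ (n / 2) = 2 * q * zc n z 1 := by
    linear_combination q * zc n z 1 * hprod - zc n z 2 ^ (n / 2) * hq1
  have hpow : zc n z 2 ^ n = 4 * q := by
    rw [← hev.pow_div_two_sq, hhalf]
    linear_combination 4 * q * hq1
  refine ⟨by rw [pow_succ, hpow], by rw [hhalf, sub_self, mul_zero, mul_zero], ?_⟩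
  rw [hhalf, hpow]
  ring

theorem MemV2.quadricQHRelations (hV : MemV2 n q z) (hn : 2 ≤ n) :
    QuadricQHRelations n q (zc n z 2)
      (Complex.I ^ (n / 2) * (2 * q * zc n z 1 - zc n z 2 ^ (n / 2))) := by
  obtain ⟨-, heven, hq1⟩ := hV
  have hz2 : zc n z 2 = 0 := heven 1 le_rfl (by omega)
  have hsign : (Complex.I ^ (n / 2)) ^ 2 * (-1 : ℂ) ^ ((n - 2) / 2) = -1 := by
    rw [← pow_mul, mul_comm (n / 2) 2, pow_mul, Complex.I_sq, ← pow_add]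
    exact Odd.neg_one_pow ⟨(n - 2) / 2, by omega⟩
  refine ⟨by simp [hz2], by simp [hz2], ?_⟩
  rw [hz2, zero_pow (by omega), zero_pow (by omega)]
  linear_combination 4 * q * (Complex.I ^ (n / 2)) ^ 2 * hq1 + 4 * q * hsign

end CriticalPoints

/-- **Small-quantum-cohomology relations at the critical points.**
For even `n ≥ 4`, `q ≠ 0`, and every critical point `p` of `W₀`, setting `f₁ = z₂(p)` and
`f₂ = i^{n/2}·(2q·z₁(p) − z₂(p)^{n/2})`, one has `f₁^{n+1} = 4q·f₁`, `f₁·f₂ = 0`, and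
`f₂² = −4q + f₁ⁿ`. -/
theorem quadric_mirror_quantum_relations (n : ℕ) (hn : 4 ≤ n) (hev : Even n)
    (q : ℂ) (hq : q ≠ 0) (z : Fin n → ℂ) (hz : IsCritPt n q z) :
    let f₁ : ℂ := zc n z 2
    let f₂ : ℂ := Complex.I ^ (n / 2) * (2 * q * zc n z 1 - (zc n z 2) ^ (n / 2))
    f₁ ^ (n + 1) = 4 * q * f₁ ∧ f₁ * f₂ = 0 ∧ f₂ ^ 2 = -4 * q + f₁ ^ n := by
  intro f₁ f₂
  rcases hz.memV1_or_memV2 hn hev hq with hV | hV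
  exacts [hV.quadricQHRelations (by omega) hev, hV.quadricQHRelations (by omega)]
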